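/- Every Schottky-like subgroup of PSL(n+1,ℂ) is a discrete subgroup of PSL(n+1,ℂ). -/

import Mathlib

open scoped MatrixGroups
open Matrix Filter Topology

set_option synthInstance.maxHeartbeats 1000000
set_option maxHeartbeats 1000000

noncomputable section

namespace Paper

/-- `ℂ^{n+1}`. -/
abbrev V (n : ℕ) : Type := Fin (n + 1) → ℂ

/-- Complex projective `n`-space `ℙⁿ(ℂ)`. -/
abbrev PC (n : ℕ) : Type := Projectivization ℂ (V n)

/-- `PSL(n+1, ℂ)`. -/
abbrev PSL (n : ℕ) : Type := Matrix.ProjectiveSpecialLinearGroup (Fin (n + 1)) ℂ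

instance (n : ℕ) : TopologicalSpace (PC n) :=
  inferInstanceAs (TopologicalSpace (Quotient (projectivizationSetoid ℂ (V n))))

instance (n : ℕ) : TopologicalSpace (SpecialLinearGroup (Fin (n + 1)) ℂ) :=
  inferInstanceAs (TopologicalSpace {A : Matrix (Fin (n + 1)) (Fin (n + 1)) ℂ // A.det = 1})

/-- The projective transformation of `ℙⁿ(ℂ)` induced by a linear automorphism. -/
def projMap {n : ℕ} (e : V n ≃ₗ[ℂ] V n) : Equiv.Perm (PC n) where
  toFun := Projectivization.map (e : V n →ₗ[ℂ] V n) e.injective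
  invFun := Projectivization.map (e.symm : V n →ₗ[ℂ] V n) e.symm.injective
  left_inv x := by
    induction x using Projectivization.ind with
    | h v hv => simp [Projectivization.map_mk]
  right_inv x := by
    induction x using Projectivization.ind with
    | h v hv => simp [Projectivization.map_mk]

/-- The action of `SL(n+1, ℂ)` on `ℙⁿ(ℂ)`, as a homomorphism to permutations. -/
def SLproj (n : ℕ) : SpecialLinearGroup (Fin (n + 1)) ℂ →* Equiv.Perm (PC n) where
  toFun g := projMap (Matrix.SpecialLinearGroup.toLin' g)
  map_one' := by
    ext x
    induction x using Projectivization.ind with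
    | h v hv => simp [projMap, Projectivization.map_mk]
  map_mul' g h := by
    ext x
    induction x using Projectivization.ind with
    | h v hv => simp [projMap, Projectivization.map_mk]

lemma SLproj_center (n : ℕ) (g : SpecialLinearGroup (Fin (n + 1)) ℂ)
    (hg : g ∈ Subgroup.center (SpecialLinearGroup (Fin (n + 1)) ℂ)) : SLproj n g = 1 := by
  obtain ⟨r, hr, hg'⟩ := Matrix.SpecialLinearGroup.mem_center_iff.mp hg
  have hr0 : r ≠ 0 := by
    intro h
    rw [h] at hr
    simp at hr
  ext x
  induction x using Projectivization.ind with
  | h v hv =>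
    show Projectivization.map ((Matrix.SpecialLinearGroup.toLin' g : V n ≃ₗ[ℂ] V n) :
        V n →ₗ[ℂ] V n) (Matrix.SpecialLinearGroup.toLin' g).injective
        (Projectivization.mk ℂ v hv) = Projectivization.mk ℂ v hv
    rw [Projectivization.map_mk]
    have hv' : (Matrix.SpecialLinearGroup.toLin' g : V n →ₗ[ℂ] V n) v = r • v := by
      rw [Matrix.SpecialLinearGroup.toLin'_to_linearMap, Matrix.toLin'_apply, ← hg']
      funext i
      simp [Matrix.scalar, Matrix.mulVec_diagonal]
    simp only [hv']
    rw [Projectivization.mk_eq_mk_iff]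
    exact ⟨Units.mk0 r hr0, rfl⟩

/-- The action of `PSL(n+1, ℂ)` on `ℙⁿ(ℂ)`. -/
def PSLproj (n : ℕ) : PSL n →* Equiv.Perm (PC n) :=
  QuotientGroup.lift _ (SLproj n) (fun g hg => SLproj_center n g hg)

instance (n : ℕ) : MulAction (PSL n) (PC n) := MulAction.compHom _ (PSLproj n)

/-- The standard Hermitian form of signature `(n, 1)` (i.e. `(1, n)` in the paper's
convention): `⟨z,w⟩ = z₁ w̄₁ + ⋯ + z_n w̄_n − z_{n+1} w̄_{n+1}`. -/
def herm (n : ℕ) (z w : V n) : ℂ :=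
  (∑ i : Fin n, z i.castSucc * (starRingEnd ℂ) (w i.castSucc))
    - z (Fin.last n) * (starRingEnd ℂ) (w (Fin.last n))

/-- Complex hyperbolic space `ℍⁿ_ℂ = {[w] : ⟨w,w⟩ < 0} ⊂ ℙⁿ(ℂ)`. -/
def ball (n : ℕ) : Set (PC n) := {p | (herm n p.rep p.rep).re < 0}

/-- The boundary `∂ℍⁿ_ℂ = {[w] : ⟨w,w⟩ = 0}`. -/
def bd (n : ℕ) : Set (PC n) := {p | herm n p.rep p.rep = 0}

/-- An `SL(n+1,ℂ)` matrix preserves the Hermitian form (i.e. lies in `SU(1,n)`). -/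
def PreservesHerm {n : ℕ} (g : SpecialLinearGroup (Fin (n + 1)) ℂ) : Prop :=
  ∀ z w : V n, herm n (Matrix.SpecialLinearGroup.toLin' g z)
      (Matrix.SpecialLinearGroup.toLin' g w) = herm n z w

/-- `SU(1,n)` as a subgroup of `SL(n+1,ℂ)`. -/
def SU (n : ℕ) : Subgroup (SpecialLinearGroup (Fin (n + 1)) ℂ) where
  carrier := {g | PreservesHerm g}
  one_mem' := by intro z w; simp
  mul_mem' := by
    intro a b ha hb z w
    rw [_root_.map_mul]
    exact (ha (Matrix.SpecialLinearGroup.toLin' b z)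
      (Matrix.SpecialLinearGroup.toLin' b w)).trans (hb z w)
  inv_mem' := by
    intro g hg z w
    have h2 : ∀ u : V n, Matrix.SpecialLinearGroup.toLin' g
        (Matrix.SpecialLinearGroup.toLin' g⁻¹ u) = u := by
      intro u
      have h : (Matrix.SpecialLinearGroup.toLin' g) * (Matrix.SpecialLinearGroup.toLin' g⁻¹)
          = 1 := by rw [← _root_.map_mul]; simp
      exact congrArg (fun e : V n ≃ₗ[ℂ] V n => e u) h
    calc herm n (Matrix.SpecialLinearGroup.toLin' g⁻¹ z)
          (Matrix.SpecialLinearGroup.toLin' g⁻¹ w)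
        = herm n (Matrix.SpecialLinearGroup.toLin' g (Matrix.SpecialLinearGroup.toLin' g⁻¹ z))
          (Matrix.SpecialLinearGroup.toLin' g (Matrix.SpecialLinearGroup.toLin' g⁻¹ w)) :=
          (hg _ _).symm
      _ = herm n z w := by rw [h2, h2]

/-- `PU(1,n)`, realized as the image of `SU(1,n)` inside `PSL(n+1,ℂ)`. -/
def PU (n : ℕ) : Subgroup (PSL n) :=
  (SU n).map (QuotientGroup.mk' (Subgroup.center (SpecialLinearGroup (Fin (n + 1)) ℂ)))

/-- The polar hyperplane `p^⊥` of a point of `ℙⁿ(ℂ)` w.r.t. the Hermitian form. -/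
def polar {n : ℕ} (p : PC n) : Set (PC n) := {q | herm n q.rep p.rep = 0}

/-- Fixed points of `g : PSL(n+1,ℂ)` on the boundary of complex hyperbolic space. -/
def boundaryFix {n : ℕ} (g : PSL n) : Set (PC n) := {p ∈ bd n | g • p = p}

/-- `g` is loxodromic: exactly two fixed points on `∂ℍⁿ_ℂ`. -/
def IsLoxodromic {n : ℕ} (g : PSL n) : Prop :=
  ∃ a r : PC n, a ≠ r ∧ boundaryFix g = {a, r}

/-- `a` is an attracting fixed point of `g`. -/
def Attracting {n : ℕ} (g : PSL n) (a : PC n) : Prop :=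
  g • a = a ∧ ∃ U ∈ 𝓝 a, ∀ x ∈ U, Tendsto (fun m : ℕ => (g ^ m) • x) atTop (𝓝 a)

/-- `r` is a repelling fixed point of `g`. -/
def Repelling {n : ℕ} (g : PSL n) (r : PC n) : Prop := Attracting g⁻¹ r

/-- The Chen–Greenberg limit set with base point `x`. -/
def limitSetCG {n : ℕ} (Γ : Subgroup (PSL n)) (x : PC n) : Set (PC n) :=
  closure {p | ∃ g ∈ Γ, g • x = p} ∩ bd n

/-- A Schottky-like subgroup of `PSL(n+1,ℂ)` (Definition in §2 of the paper). -/
def IsSchottkyLike {n : ℕ} (Γ : Subgroup (PSL n)) : Prop :=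
  ∃ (S : Finset (PSL n)) (A : PSL n → Set (PC n)),
    (∀ a ∈ S, a⁻¹ ∈ S) ∧
    Subgroup.closure (S : Set (PSL n)) = Γ ∧
    (∀ a ∈ S, IsCompact (A a) ∧ (A a).Nonempty) ∧
    ((S : Set (PSL n)).Pairwise fun a b => Disjoint (A a) (A b)) ∧
    ∀ a ∈ S, (⋃ b ∈ (S : Set (PSL n)) \ {a⁻¹}, (a • ·) '' A b) ⊂ A a

/-! Ping-pong. Write `1 ≠ g ∈ Γ` as a reduced word `a₁ ⋯ a_k` in `S`; induction on `k` gives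
`g(A_b) ⊆ U_{a₁}` whenever `b ≠ a_k⁻¹`, where `U_a = ⋃_{c ≠ a⁻¹} a(A_c)` is `pingPongImage S A a`.
Choose base points `x_b ∈ A_b \ U_b`. By disjointness of the `A_a`, no `x_b` lies in the compact
set `K = ⋃_a U_a`, while (for `|S| ≥ 2`) every `g ≠ 1` in `Γ` moves some `x_b` into `K`. As
`ℙⁿ(ℂ)` is Hausdorff and the action is continuous, `{g | g x_b ∉ K for all b}` is then an open
neighbourhood of `1` meeting `Γ` only in `1`. If `|S| ≤ 1`, then `Γ ⊆ S ∪ {1}` is finite. -/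

section PingPong

open Function

variable {G X : Type*} [Group G] [MulAction G X] {S : Set G} {A : G → Set X}

theorem exists_isChain_prod_eq_of_mem_closure (hS : ∀ a ∈ S, a⁻¹ ∈ S) {g : G}
    (hg : g ∈ Subgroup.closure S) :
    ∃ l : List G, (∀ x ∈ l, x ∈ S) ∧ l.IsChain (fun p q => q ≠ p⁻¹) ∧ l.prod = g := by
  have step : ∀ x ∈ S, ∀ y : G, (∃ l : List G, (∀ z ∈ l, z ∈ S) ∧
      l.IsChain (fun p q => q ≠ p⁻¹) ∧ l.prod = y) →
      ∃ l : List G, (∀ z ∈ l, z ∈ S) ∧ l.IsChain (fun p q => q ≠ p⁻¹) ∧ l.prod = x * y := by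
    rintro x hx y ⟨l, hlS, hl, rfl⟩
    match l, hlS, hl with
    | [], _, _ => exact ⟨[x], by simpa using hx, List.isChain_singleton x, by simp⟩
    | b :: l', hlS, hl =>
      by_cases hb : b = x⁻¹
      · refine ⟨l', fun z hz => hlS z (List.mem_cons_of_mem b hz), hl.tail, ?_⟩
        simp [hb]
      · exact ⟨x :: b :: l', by simpa [hx] using hlS, hl.cons_cons hb, List.prod_cons⟩
  induction hg using Subgroup.closure_induction_left with
  | one => exact ⟨[], by simp, List.isChain_nil, rfl⟩
  | mul_left x hx y _ ih => exact step x hx y ih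
  | inv_mul_cancel x hx y _ ih => exact step x⁻¹ (hS x hx) y ih

def pingPongImage (S : Set G) (A : G → Set X) (a : G) : Set X :=
  ⋃ b ∈ S \ {a⁻¹}, (a • ·) '' A b

theorem image_smul_subset_pingPongImage {a b : G} (hb : b ∈ S) (hba : b ≠ a⁻¹) :
    (a • ·) '' A b ⊆ pingPongImage S A a :=
  Set.subset_biUnion_of_mem (u := fun b => (a • ·) '' A b) ⟨hb, hba⟩

theorem exists_image_prod_subset_pingPongImage (hU : ∀ a ∈ S, pingPongImage S A a ⊆ A a) :
    ∀ (t : List G) (a : G), (∀ x ∈ a :: t, x ∈ S) → (a :: t).IsChain (fun p q => q ≠ p⁻¹) →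
      ∃ c : G, ∀ b ∈ S, b ≠ c⁻¹ → ((a :: t).prod • ·) '' A b ⊆ pingPongImage S A a
  | [], a, _, _ => ⟨a, fun b hb hba => by simpa using image_smul_subset_pingPongImage hb hba⟩
  | a' :: t, a, hS, hchain => by
    obtain ⟨c, hc⟩ := exists_image_prod_subset_pingPongImage hU t a'
      (fun x hx => hS x (List.mem_cons_of_mem a hx)) hchain.tail
    refine ⟨c, fun b hb hbc => ?_⟩
    have ha' : a' ∈ S := hS a' (by simp)
    calc ((a :: a' :: t).prod • ·) '' A b
        = (a • ·) '' (((a' :: t).prod • ·) '' A b) := by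
          rw [Set.image_image, List.prod_cons]; simp only [mul_smul]
      _ ⊆ (a • ·) '' A a' := Set.image_mono ((hc b hb hbc).trans (hU a' ha'))
      _ ⊆ pingPongImage S A a :=
          image_smul_subset_pingPongImage ha' (List.isChain_cons_cons.1 hchain).1

theorem exists_image_subset_pingPongImage (hS : ∀ a ∈ S, a⁻¹ ∈ S) (hS₂ : S.Nontrivial)
    (hU : ∀ a ∈ S, pingPongImage S A a ⊆ A a) {g : G} (hg : g ∈ Subgroup.closure S)
    (hg₁ : g ≠ 1) : ∃ b ∈ S, ∃ a ∈ S, (g • ·) '' A b ⊆ pingPongImage S A a := by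
  obtain ⟨l, hlS, hl, rfl⟩ := exists_isChain_prod_eq_of_mem_closure hS hg
  match l, hlS, hl with
  | [], _, _ => exact absurd List.prod_nil hg₁
  | a :: t, hlS, hl =>
    obtain ⟨c, hc⟩ := exists_image_prod_subset_pingPongImage hU t a hlS hl
    obtain ⟨b, hb, hbc⟩ := hS₂.exists_ne c⁻¹
    exact ⟨b, hb, a, hlS a (by simp), hc b hb hbc⟩

theorem notMem_biUnion_pingPongImage (hdisj : S.Pairwise (Disjoint on A))
    (hU : ∀ a ∈ S, pingPongImage S A a ⊆ A a) {b : G} (hb : b ∈ S) {x : X}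
    (hx : x ∈ A b \ pingPongImage S A b) : x ∉ ⋃ a ∈ S, pingPongImage S A a := by
  simp only [Set.mem_iUnion, not_exists]
  intro a ha hxa
  rcases eq_or_ne a b with rfl | hab
  · exact hx.2 hxa
  · exact Set.disjoint_left.1 (hdisj ha hb hab) (hU a ha hxa) hx.1

theorem closure_subset_insert_one (hS : ∀ a ∈ S, a⁻¹ ∈ S) (hS₁ : S.Subsingleton) :
    (Subgroup.closure S : Set G) ⊆ insert 1 S := by
  intro g hg
  induction hg using Subgroup.closure_induction with
  | mem x hx => exact Set.mem_insert_of_mem 1 hx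
  | one => exact Set.mem_insert 1 S
  | mul x y _ _ hx hy =>
    rcases hx with rfl | hx
    · simpa using hy
    rcases hy with rfl | hy
    · simpa using Or.inr hx
    simp [hS₁ hx (hS y hy)]
  | inv x _ hx =>
    rcases hx with rfl | hx
    · simp
    · exact Set.mem_insert_of_mem 1 (hS x hx)

variable [TopologicalSpace X]

theorem isCompact_pingPongImage [ContinuousConstSMul G X] (hSfin : S.Finite)
    (hA : ∀ a ∈ S, IsCompact (A a)) (a : G) : IsCompact (pingPongImage S A a) :=
  hSfin.sdiff.isCompact_biUnion fun b hb => (hA b hb.1).image (continuous_const_smul a)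

theorem discreteTopology_closure_of_pingPong [TopologicalSpace G] [IsTopologicalGroup G]
    [T1Space G] [T2Space X] [ContinuousSMul G X] (hSfin : S.Finite) (hS : ∀ a ∈ S, a⁻¹ ∈ S)
    (hA : ∀ a ∈ S, IsCompact (A a)) (hdisj : S.Pairwise (Disjoint on A))
    (hU : ∀ a ∈ S, pingPongImage S A a ⊂ A a) : DiscreteTopology (Subgroup.closure S) := by
  rcases S.subsingleton_or_nontrivial with hS₁ | hS₂
  · have : Finite (Subgroup.closure S) :=
      ((hSfin.insert 1).subset (closure_subset_insert_one hS hS₁)).to_subtype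
    infer_instance
  have : Finite S := hSfin.to_subtype
  choose x hx using fun b : S => Set.exists_of_ssubset (hU b b.2)
  set K := ⋃ a ∈ S, pingPongImage S A a
  have hK : IsClosed K :=
    (hSfin.isCompact_biUnion fun a _ => isCompact_pingPongImage hSfin hA a).isClosed
  have hW : IsOpen (⋂ b : S, (· • x b) ⁻¹' Kᶜ) :=
    isOpen_iInter_of_finite fun b => hK.isOpen_compl.preimage
      (continuous_id.smul continuous_const : Continuous fun g : G => g • x b)
  apply discreteTopology_of_isOpen_singleton_one
  convert hW.preimage continuous_subtype_val
  ext ⟨g, hg⟩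
  simp only [Set.mem_singleton_iff, Subgroup.mk_eq_one, Set.mem_preimage, Set.mem_iInter,
    Set.mem_compl_iff]
  constructor
  · rintro rfl b
    rw [one_smul]
    exact notMem_biUnion_pingPongImage hdisj (fun a ha => (hU a ha).subset) b.2 (hx b)
  · intro hgK
    by_contra hg₁
    obtain ⟨b, hb, a, ha, hgba⟩ :=
      exists_image_subset_pingPongImage hS hS₂ (fun a ha => (hU a ha).subset) hg hg₁
    exact hgK ⟨b, hb⟩ (Set.mem_biUnion ha (hgba ⟨_, (hx ⟨b, hb⟩).1, rfl⟩))

end PingPong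

theorem _root_.Projectivization.isOpenQuotientMap_quotientMk {K V : Type*} [DivisionRing K]
    [AddCommGroup V] [Module K V] [TopologicalSpace V] [ContinuousConstSMul K V] :
    IsOpenQuotientMap (Quotient.mk (projectivizationSetoid K V)) := by
  refine ⟨Quotient.mk_surjective, continuous_quot_mk, fun U hU => ?_⟩
  have hsat : Quotient.mk (projectivizationSetoid K V) ⁻¹'
      (Quotient.mk (projectivizationSetoid K V) '' U) = ⋃ c : Kˣ,
      (fun w : {v : V // v ≠ 0} => (⟨c • (w : V), (smul_ne_zero_iff_ne c).2 w.2⟩ :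
        {v : V // v ≠ 0})) ⁻¹' U := by
    ext w
    simp only [Set.mem_preimage, Set.mem_image, Set.mem_iUnion]
    constructor
    · rintro ⟨u, hu, huw⟩
      obtain ⟨c, hc⟩ := Quotient.exact huw
      exact ⟨c, by convert hu⟩
    · rintro ⟨c, hc⟩
      exact ⟨_, hc, Quotient.sound ⟨c, rfl⟩⟩
  change IsOpen (Quotient.mk (projectivizationSetoid K V) ⁻¹' _)
  rw [hsat]
  exact isOpen_iUnion fun c => hU.preimage
    (((continuous_const_smul (c : K)).comp continuous_subtype_val).subtype_mk _)

theorem _root_.Projectivization.mk_eq_mk_iff_mul_eq_mul {K ι : Type*} [Field K] {v w : ι → K}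
    (hv : v ≠ 0) (hw : w ≠ 0) :
    Projectivization.mk K v hv = Projectivization.mk K w hw ↔ ∀ i j, v i * w j = v j * w i := by
  rw [Projectivization.mk_eq_mk_iff']
  constructor
  · rintro ⟨a, rfl⟩ i j
    simp only [Pi.smul_apply, smul_eq_mul]
    ring
  · intro h
    obtain ⟨j, hj⟩ := Function.ne_iff.1 hw
    refine ⟨v j / w j, funext fun i => ?_⟩
    rw [Pi.zero_apply] at hj
    rw [Pi.smul_apply, smul_eq_mul, div_mul_eq_mul_div, h j i, mul_div_cancel_right₀ _ hj]

theorem _root_.Projectivization.t2Space_quotient_pi {K ι : Type*} [Field K] [TopologicalSpace K]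
    [ContinuousMul K] [T2Space K] : T2Space (Quotient (projectivizationSetoid K (ι → K))) := by
  rw [t2Space_iff_of_isOpenQuotientMap Projectivization.isOpenQuotientMap_quotientMk]
  have : {q : {v : ι → K // v ≠ 0} × {v : ι → K // v ≠ 0} |
      Quotient.mk (projectivizationSetoid K (ι → K)) q.1 = Quotient.mk _ q.2}
      = ⋂ (i) (j), {q | q.1.1 i * q.2.1 j = q.1.1 j * q.2.1 i} := by
    ext ⟨⟨v, hv⟩, ⟨w, hw⟩⟩
    simp only [Set.mem_ofPred_eq, Set.mem_iInter]
    exact Projectivization.mk_eq_mk_iff_mul_eq_mul hv hw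
  have hfst (i : ι) : Continuous fun q : {v : ι → K // v ≠ 0} × {v : ι → K // v ≠ 0} => q.1.1 i :=
    (continuous_apply i).comp (continuous_subtype_val.comp continuous_fst)
  have hsnd (i : ι) : Continuous fun q : {v : ι → K // v ≠ 0} × {v : ι → K // v ≠ 0} => q.2.1 i :=
    (continuous_apply i).comp (continuous_subtype_val.comp continuous_snd)
  rw [this]
  exact isClosed_iInter fun i => isClosed_iInter fun j =>
    isClosed_eq ((hfst i).mul (hsnd j)) ((hfst j).mul (hsnd i))

instance _root_.Subgroup.instIsClosedCenter {G : Type*} [Group G] [TopologicalSpace G]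
    [ContinuousMul G] [T2Space G] : IsClosed (Subgroup.center G : Set G) := by
  rw [Subgroup.coe_center, ← Set.centralizer_univ]
  exact Set.isClosed_centralizer _

-- The topology on `SL(n+1, ℂ)` declared above is Mathlib's only up to unfolding, which instance
-- search does not see through.
instance (n : ℕ) : IsTopologicalGroup (SpecialLinearGroup (Fin (n + 1)) ℂ) :=
  SpecialLinearGroup.topologicalGroup

instance (n : ℕ) : T1Space (SpecialLinearGroup (Fin (n + 1)) ℂ) :=
  SpecialLinearGroup.instT1Space

instance (n : ℕ) : T2Space (PC n) := Projectivization.t2Space_quotient_pi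

instance (n : ℕ) : ContinuousSMul (PSL n) (PC n) where
  continuous_smul := by
    refine (QuotientGroup.isOpenQuotientMap_mk.prodMap
      Projectivization.isOpenQuotientMap_quotientMk).continuous_comp_iff.1 ?_
    -- `[g] • [v] = [g *ᵥ v]` holds definitionally.
    have hmul : Continuous fun q : SpecialLinearGroup (Fin (n + 1)) ℂ × {v : V n // v ≠ 0} =>
        (q.1 : Matrix (Fin (n + 1)) (Fin (n + 1)) ℂ) *ᵥ (q.2 : V n) :=
      (continuous_subtype_val.comp continuous_fst).matrix_mulVec
        (continuous_subtype_val.comp continuous_snd)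
    exact continuous_quot_mk.comp (hmul.subtype_mk _)

/-- every Schottky-like subgroup of `PSL(n+1,ℂ)` is discrete. -/
theorem schottkyLike_discrete (n : ℕ) (Γ : Subgroup (PSL n))
    (h : IsSchottkyLike Γ) : DiscreteTopology Γ := by
  obtain ⟨S, A, hS, rfl, hA, hdisj, hU⟩ := h
  exact discreteTopology_closure_of_pingPong S.finite_toSet hS (fun a ha => (hA a ha).1) hdisj hU

end Paper
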